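/- In any single-winner instant-runoff election, adding ballots on which the original winner W is ranked first cannot change the winner: if W wins (P,1) and P' is obtained from P by adding identical ballots ranking W first, then W wins (P',1). -/

import Mathlib

/-!
While `W` remains, the added ballots all count for `W`, so they raise `W`'s total and leave every
other total unchanged. In such a situation the eliminated candidate does not change unless it is
`W` itself: its own total is the same and nobody else lost votes. Since `W` wins under `P`, it is
never eliminated there, so by induction every round eliminates the same candidate under both
profiles and `W` wins the enlarged election too.
-/

section IRV

variable {C : Type*} [DecidableEq C] [LinearOrder C]

/-- The highest-ranked candidate on ballot `b` who is still remaining. -/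
def topChoice (rem : Finset C) (b : List C) : Option C := b.find? (· ∈ rem)

/-- The current vote total of candidate `c`: the number of ballots in `P` whose
highest-ranked remaining candidate is `c` (ballots ranking no remaining
candidate are exhausted). -/
def score (P : List (List C)) (rem : Finset C) (c : C) : ℕ :=
  (P.filter (fun b => topChoice rem b = some c)).length

/-- The candidate eliminated this round: a remaining candidate with the fewest
current votes, with ties broken deterministically by the linear order on `C`. -/
def loser (P : List (List C)) (rem : Finset C) (h : rem.Nonempty) : C :=
  (rem.filter (fun c => ∀ d ∈ rem, score P rem c ≤ score P rem d)).min'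
    (by
      obtain ⟨c, hc, hmin⟩ := rem.exists_min_image (score P rem) h
      exact ⟨c, Finset.mem_filter.mpr ⟨hc, hmin⟩⟩)

theorem loser_mem (P : List (List C)) (rem : Finset C) (h : rem.Nonempty) :
    loser P rem h ∈ rem :=
  Finset.filter_subset _ _ (Finset.min'_mem _ _)

/-- The IRV winner among the remaining candidates: repeatedly eliminate the
remaining candidate with the fewest current votes (transferring their ballots to
the next remaining ranked candidate) until a single candidate remains. -/
noncomputable def irvWinner (P : List (List C)) (rem : Finset C) : Option C :=
  if h : 1 < rem.card then
    irvWinner P (rem.erase (loser P rem (Finset.card_pos.mp (by omega))))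
  else rem.toList.head?
termination_by rem.card
decreasing_by exact Finset.card_erase_lt_of_mem (loser_mem _ _ _)

end IRV

section

variable {C : Type*} [DecidableEq C]

theorem topChoice_eq_of_head?_eq {rem : Finset C} {b : List C} {W : C}
    (hb : b.head? = some W) (hW : W ∈ rem) : topChoice rem b = some W := by
  obtain ⟨t, rfl⟩ := List.head?_eq_some_iff.mp hb
  exact List.find?_cons_of_pos (by simpa using hW)

theorem score_append (P Q : List (List C)) (rem : Finset C) (c : C) :
    score (P ++ Q) rem c = score P rem c + score Q rem c := by
  simp only [score, List.filter_append, List.length_append]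

theorem score_replicate (k : ℕ) (b : List C) (rem : Finset C) (c : C) :
    score (List.replicate k b) rem c = if topChoice rem b = some c then k else 0 := by
  unfold score
  split_ifs with h <;> simp [h]

theorem score_append_replicate_of_head?_eq (P : List (List C)) {W : C} {b : List C}
    (hb : b.head? = some W) (k : ℕ) {rem : Finset C} (hW : W ∈ rem) (c : C) :
    score (P ++ List.replicate k b) rem c = score P rem c + if c = W then k else 0 := by
  rw [score_append, score_replicate, topChoice_eq_of_head?_eq hb hW]
  simp only [Option.some.injEq, eq_comm]

variable [LinearOrder C]

theorem loser_isLeast (P : List (List C)) (rem : Finset C) (h : rem.Nonempty) :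
    IsLeast {c | c ∈ rem ∧ ∀ d ∈ rem, score P rem c ≤ score P rem d} (loser P rem h) := by
  unfold loser
  simpa using Finset.isLeast_min' (rem.filter _) _

theorem loser_eq_of_score_le {P Q : List (List C)} {rem : Finset C} (h : rem.Nonempty)
    (hle : ∀ c ∈ rem, score P rem c ≤ score Q rem c)
    (hL : score Q rem (loser P rem h) = score P rem (loser P rem h)) :
    loser Q rem h = loser P rem h := by
  obtain ⟨⟨hLrem, hLmin⟩, hLleast⟩ := loser_isLeast P rem h
  refine (loser_isLeast Q rem h).unique ⟨⟨hLrem, fun d hd => ?_⟩, fun c ⟨hc, hcmin⟩ => ?_⟩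
  · exact hL ▸ (hLmin d hd).trans (hle d hd)
  · refine hLleast ⟨hc, fun d hd => ?_⟩
    calc score P rem c ≤ score Q rem c := hle c hc
      _ ≤ score Q rem (loser P rem h) := hcmin _ hLrem
      _ = score P rem (loser P rem h) := hL
      _ ≤ score P rem d := hLmin d hd

theorem irvWinner_mem {P : List (List C)} {rem : Finset C} {c : C}
    (h : irvWinner P rem = some c) : c ∈ rem := by
  induction rem using Finset.strongInduction with
  | _ rem ih =>
    rw [irvWinner] at h
    split at h
    · exact Finset.mem_of_mem_erase (ih _ (Finset.erase_ssubset (loser_mem P rem _)) h)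
    · exact Finset.mem_toList.mp (List.mem_of_mem_head? h)

theorem irvWinner_eq_of_score_boost {P Q : List (List C)} {W : C}
    (hle : ∀ rem : Finset C, W ∈ rem → ∀ c, score P rem c ≤ score Q rem c)
    (heq : ∀ rem : Finset C, W ∈ rem → ∀ c ≠ W, score Q rem c = score P rem c)
    {rem : Finset C} (hWrem : W ∈ rem) (hwin : irvWinner P rem = some W) :
    irvWinner Q rem = some W := by
  induction rem using Finset.strongInduction with
  | _ rem ih =>
    rw [irvWinner] at hwin ⊢
    split_ifs at hwin ⊢ with hcard
    · have hne : rem.Nonempty := Finset.card_pos.mp (by omega)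
      have hWrem' : W ∈ rem.erase (loser P rem hne) := irvWinner_mem hwin
      have hLW : loser P rem hne ≠ W := (Finset.ne_of_mem_erase hWrem').symm
      rw [loser_eq_of_score_le hne (fun c _ => hle rem hWrem c) (heq rem hWrem _ hLW)]
      exact ih _ (Finset.erase_ssubset (loser_mem P rem hne)) hWrem' hwin
    · exact hwin

end

/-- In a single-winner instant-runoff election, adding identical ballots on
which the original winner `W` is ranked first cannot change the winner. -/
theorem irv_positive_involvement {C : Type*} [DecidableEq C] [LinearOrder C] [Fintype C]
    (P : List (List C)) (W : C) (b : List C) (hb : b.head? = some W) (k : ℕ)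
    (hW : irvWinner P Finset.univ = some W) :
    irvWinner (P ++ List.replicate k b) Finset.univ = some W := by
  have hscore := fun rem (hWrem : W ∈ rem) => score_append_replicate_of_head?_eq P hb k hWrem
  refine irvWinner_eq_of_score_boost (fun rem hWrem c => ?_) (fun rem hWrem c hc => ?_)
    (Finset.mem_univ W) hW
  · simp only [hscore rem hWrem c, Nat.le_add_right]
  · simp only [hscore rem hWrem c, hc, if_false, add_zero]
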